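/- Let X ⊂ ℝ^d be relatively separated, s > d, H a Hilbert space. Then there exists C > 0 such that ‖A‖_{B(ℓ²(X;H))} ≤ C‖A‖_{J_s} for every A ∈ J_s; in particular, every matrix in the Jaffard class defines a bounded operator on ℓ²(X;H). -/

import Mathlib

open scoped BigOperators

noncomputable section

abbrev E (d : ℕ) := EuclideanSpace ℝ (Fin d)

/-- `X ⊂ ℝ^d` is relatively separated: the number of points of `X` in any
translated unit cube is uniformly bounded. -/
def RelSep {d : ℕ} (X : Set (E d)) : Prop :=
  ∃ N : ℕ, ∀ x : E d,
    (X ∩ {y | ∀ i, x i ≤ y i ∧ y i ≤ x i + 1}).Finite ∧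
    (X ∩ {y | ∀ i, x i ≤ y i ∧ y i ≤ x i + 1}).ncard ≤ N

/-! The Jaffard bound says `‖A k l‖ ≤ M w(k, l)` with `w(k, l) = (1 + ‖k - l‖)^(-s)`, so by
Schur's test (Cauchy–Schwarz in each row, then the column sums after summing over the rows)
it suffices that the row and column sums of `w` over `X` are uniformly bounded. Taking integer
parts of the coordinates maps `X` to `ℤ^d` with at most `N` points in each fibre, and
`(1 + ‖x - y‖)^(-s) ≤ 2^s ∏ᵢ (1 + |⌊xᵢ⌋ - ⌊yᵢ⌋|)^(-t)` whenever `d t ≤ s`; since `s > d`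
one can take `t > 1`, and then the product weight is summable over `ℤ^d`. -/

open Finset

section SchurTest

variable {ι : Type*}

theorem summable_mul_and_sq_tsum_mul_le {w a : ι → ℝ} (hw0 : ∀ i, 0 ≤ w i)
    (ha0 : ∀ i, 0 ≤ a i) (hw : Summable w) (hwa : Summable fun i => w i * a i ^ 2) :
    Summable (fun i => w i * a i) ∧
      (∑' i, w i * a i) ^ 2 ≤ (∑' i, w i) * ∑' i, w i * a i ^ 2 := by
  have hsum : Summable fun i => w i * a i :=
    ((hw.add hwa).div_const 2).of_nonneg_of_le (fun i => mul_nonneg (hw0 i) (ha0 i))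
      fun i => by nlinarith [hw0 i, mul_nonneg (hw0 i) (sq_nonneg (a i - 1))]
  refine ⟨hsum, ?_⟩
  have hR : 0 ≤ (∑' i, w i) * ∑' i, w i * a i ^ 2 :=
    mul_nonneg (tsum_nonneg hw0) (tsum_nonneg fun i => mul_nonneg (hw0 i) (sq_nonneg _))
  have hle : ∑' i, w i * a i ≤ √((∑' i, w i) * ∑' i, w i * a i ^ 2) := by
    refine hsum.tsum_le_of_sum_le fun F => Real.le_sqrt_of_sq_le ?_
    calc (∑ i ∈ F, w i * a i) ^ 2 ≤ (∑ i ∈ F, w i) * ∑ i ∈ F, w i * a i ^ 2 :=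
          sum_sq_le_sum_mul_sum_of_sq_le_mul F (fun i _ => hw0 i)
            (fun i _ => mul_nonneg (hw0 i) (sq_nonneg _)) fun i _ => le_of_eq (by ring)
      _ ≤ (∑' i, w i) * ∑' i, w i * a i ^ 2 :=
          mul_le_mul (hw.sum_le_tsum F fun i _ => hw0 i)
            (hwa.sum_le_tsum F fun i _ => mul_nonneg (hw0 i) (sq_nonneg _))
            (sum_nonneg fun i _ => mul_nonneg (hw0 i) (sq_nonneg _)) (tsum_nonneg hw0)
  calc (∑' i, w i * a i) ^ 2
      ≤ √((∑' i, w i) * ∑' i, w i * a i ^ 2) ^ 2 :=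
        pow_le_pow_left₀ (tsum_nonneg fun i => mul_nonneg (hw0 i) (ha0 i)) hle 2
    _ = _ := Real.sq_sqrt hR

variable {w : ι → ι → ℝ} {S : ℝ}

theorem schur_test_of_nonneg (hS : 0 ≤ S) (hw0 : ∀ k l, 0 ≤ w k l)
    (hrow : ∀ k, Summable (w k)) (hrowS : ∀ k, ∑' l, w k l ≤ S)
    (hcol : ∀ l, Summable fun k => w k l) (hcolS : ∀ l, ∑' k, w k l ≤ S)
    {a : ι → ℝ} (ha0 : ∀ l, 0 ≤ a l) (ha : Summable fun l => a l ^ 2) :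
    (∀ k, Summable fun l => w k l * a l) ∧
      Summable (fun k => (∑' l, w k l * a l) ^ 2) ∧
      ∑' k, (∑' l, w k l * a l) ^ 2 ≤ S ^ 2 * ∑' l, a l ^ 2 := by
  have hwa : ∀ k, Summable fun l => w k l * a l ^ 2 := fun k =>
    (ha.mul_left S).of_nonneg_of_le (fun l => mul_nonneg (hw0 k l) (sq_nonneg _)) fun l =>
      mul_le_mul_of_nonneg_right
        (((hrow k).le_tsum l fun j _ => hw0 k j).trans (hrowS k)) (sq_nonneg _)
  have hCS := fun k => summable_mul_and_sq_tsum_mul_le (hw0 k) ha0 (hrow k) (hwa k)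
  have hrowCS : ∀ k, (∑' l, w k l * a l) ^ 2 ≤ S * ∑' l, w k l * a l ^ 2 := fun k =>
    (hCS k).2.trans (mul_le_mul_of_nonneg_right (hrowS k)
      (tsum_nonneg fun l => mul_nonneg (hw0 k l) (sq_nonneg _)))
  -- Interchanging the finite sum over `k` with the sum over `l` puts the column sums in play.
  have hfin : ∀ F : Finset ι,
      ∑ k ∈ F, (∑' l, w k l * a l) ^ 2 ≤ S ^ 2 * ∑' l, a l ^ 2 := by
    intro F
    have hcolF : ∀ l, ∑ k ∈ F, w k l ≤ S := fun l =>
      ((hcol l).sum_le_tsum F fun k _ => hw0 k l).trans (hcolS l)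
    calc ∑ k ∈ F, (∑' l, w k l * a l) ^ 2
        ≤ ∑ k ∈ F, S * ∑' l, w k l * a l ^ 2 := sum_le_sum fun k _ => hrowCS k
      _ = S * ∑' l, (∑ k ∈ F, w k l) * a l ^ 2 := by
          rw [← mul_sum, ← Summable.tsum_finsetSum fun k _ => hwa k]
          simp only [sum_mul]
      _ ≤ S * ∑' l, S * a l ^ 2 := by
          refine mul_le_mul_of_nonneg_left (Summable.tsum_le_tsum (fun l => ?_) ?_
            (ha.mul_left S)) hS
          · exact mul_le_mul_of_nonneg_right (hcolF l) (sq_nonneg _)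
          · simpa only [sum_mul] using summable_sum fun k _ => hwa k
      _ = S ^ 2 * ∑' l, a l ^ 2 := by rw [tsum_mul_left]; ring
  have hsq : Summable fun k => (∑' l, w k l * a l) ^ 2 :=
    summable_of_sum_le (fun _ => sq_nonneg _) hfin
  exact ⟨fun k => (hCS k).1, hsq, hsq.tsum_le_of_sum_le hfin⟩

theorem schur_test {𝕜 V W : Type*} [NontriviallyNormedField 𝕜]
    [NormedAddCommGroup V] [NormedSpace 𝕜 V] [NormedAddCommGroup W] [NormedSpace 𝕜 W]
    [CompleteSpace W] (hS : 0 ≤ S) (hw0 : ∀ k l, 0 ≤ w k l)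
    (hrow : ∀ k, Summable (w k)) (hrowS : ∀ k, ∑' l, w k l ≤ S)
    (hcol : ∀ l, Summable fun k => w k l) (hcolS : ∀ l, ∑' k, w k l ≤ S)
    {A : ι → ι → V →L[𝕜] W} (hA : ∀ k l, ‖A k l‖ ≤ w k l)
    {g : ι → V} (hg : Summable fun l => ‖g l‖ ^ 2) :
    (∀ k, Summable fun l => A k l (g l)) ∧
      Summable (fun k => ‖∑' l, A k l (g l)‖ ^ 2) ∧
      ∑' k, ‖∑' l, A k l (g l)‖ ^ 2 ≤ S ^ 2 * ∑' l, ‖g l‖ ^ 2 := by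
  obtain ⟨hrowg, hsq, hle⟩ :=
    schur_test_of_nonneg hS hw0 hrow hrowS hcol hcolS (fun l => norm_nonneg (g l)) hg
  have hAg : ∀ k l, ‖A k l (g l)‖ ≤ w k l * ‖g l‖ := fun k l =>
    (A k l).le_of_opNorm_le (hA k l) (g l)
  have hnorm : ∀ k, Summable fun l => ‖A k l (g l)‖ := fun k =>
    (hrowg k).of_nonneg_of_le (fun _ => norm_nonneg _) (hAg k)
  have hAgsq : ∀ k, ‖∑' l, A k l (g l)‖ ^ 2 ≤ (∑' l, w k l * ‖g l‖) ^ 2 := fun k =>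
    pow_le_pow_left₀ (norm_nonneg _) ((norm_tsum_le_tsum_norm (hnorm k)).trans
      ((hnorm k).tsum_le_tsum (hAg k) (hrowg k))) 2
  have hsq' : Summable fun k => ‖∑' l, A k l (g l)‖ ^ 2 :=
    hsq.of_nonneg_of_le (fun _ => sq_nonneg _) hAgsq
  exact ⟨fun k => (hnorm k).of_norm, hsq', (hsq'.tsum_le_tsum hAgsq hsq).trans hle⟩

end SchurTest

section LatticeSums

theorem summable_one_add_abs_int_rpow_neg {t : ℝ} (ht : 1 < t) :
    Summable fun m : ℤ => (1 + |(m : ℝ)|) ^ (-t) := by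
  have hnat : Summable fun n : ℕ => (1 + (n : ℝ)) ^ (-t) := by
    have h := (summable_nat_add_iff 1).2 (Real.summable_nat_rpow.2 (neg_lt_neg ht))
    exact h.congr fun n => by push_cast; ring_nf
  refine summable_int_iff_summable_nat_and_neg.2 ⟨?_, ?_⟩ <;>
    simpa only [Int.cast_natCast, Int.cast_neg, abs_neg, Nat.abs_cast] using hnat

theorem summable_prod_apply {ι κ : Type*} [Fintype ι] {f : κ → ℝ} (hf0 : ∀ j, 0 ≤ f j)
    (hf : Summable f) : Summable fun x : ι → κ => ∏ i, f (x i) := by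
  classical
  refine summable_of_sum_le (c := ∏ _i : ι, ∑' j, f j)
    (fun x => prod_nonneg fun i _ => hf0 (x i)) fun u => ?_
  calc ∑ x ∈ u, ∏ i, f (x i)
      ≤ ∑ x ∈ Fintype.piFinset fun i => u.image (· i), ∏ i, f (x i) :=
        sum_le_sum_of_subset_of_nonneg
          (fun x hx => Fintype.mem_piFinset.2 fun i => mem_image_of_mem _ hx)
          fun x _ _ => prod_nonneg fun i _ => hf0 (x i)
    _ = ∏ i, ∑ j ∈ u.image (· i), f j := (prod_univ_sum _ fun _ => f).symm
    _ ≤ ∏ _i : ι, ∑' j, f j :=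
        prod_le_prod (fun i _ => sum_nonneg fun j _ => hf0 j)
          fun i _ => hf.sum_le_tsum _ fun j _ => hf0 j

theorem summable_comp_and_tsum_comp_le_of_card_fiber_le {ι κ : Type*} [DecidableEq κ]
    {φ : ι → κ} {N : ℕ} (hφ : ∀ (u : Finset ι) (n : κ), #{l ∈ u | φ l = n} ≤ N)
    {f : κ → ℝ} (hf0 : ∀ n, 0 ≤ f n) (hf : Summable f) :
    Summable (fun l => f (φ l)) ∧ ∑' l, f (φ l) ≤ N * ∑' n, f n := by
  have hfin : ∀ u : Finset ι, ∑ l ∈ u, f (φ l) ≤ N * ∑' n, f n := fun u => by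
    rw [sum_comp]
    calc ∑ n ∈ u.image φ, #{l ∈ u | φ l = n} • f n ≤ ∑ n ∈ u.image φ, N * f n :=
          sum_le_sum fun n _ => by
            rw [nsmul_eq_mul]
            exact mul_le_mul_of_nonneg_right (by exact_mod_cast hφ u n) (hf0 n)
      _ ≤ N * ∑' n, f n := by
          rw [← mul_sum]
          exact mul_le_mul_of_nonneg_left (hf.sum_le_tsum _ fun n _ => hf0 n) N.cast_nonneg
  have hsum : Summable fun l => f (φ l) := summable_of_sum_le (fun l => hf0 (φ l)) hfin
  exact ⟨hsum, hsum.tsum_le_of_sum_le hfin⟩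

end LatticeSums

section RelativelySeparated

variable {d : ℕ}

def latticeFloor (x : E d) : Fin d → ℤ := fun i => ⌊x i⌋

theorem one_add_abs_floor_sub_floor_le (a b : ℝ) :
    1 + |((⌊a⌋ - ⌊b⌋ : ℤ) : ℝ)| ≤ 2 * (1 + |a - b|) := by
  have ha := Int.floor_le a
  have ha' := Int.lt_floor_add_one a
  have hb := Int.floor_le b
  have hb' := Int.lt_floor_add_one b
  have hab : |((⌊a⌋ - ⌊b⌋ : ℤ) : ℝ)| ≤ |a - b| + 1 := by
    rw [abs_le]
    push_cast
    constructor <;> linarith [neg_abs_le (a - b), le_abs_self (a - b)]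
  linarith [abs_nonneg (a - b)]

theorem one_add_norm_sub_rpow_neg_le {s t : ℝ} (ht : 0 ≤ t) (hts : d * t ≤ s) (x y : E d) :
    (1 + ‖x - y‖) ^ (-s) ≤
      2 ^ s * ∏ i, (1 + |((latticeFloor x - latticeFloor y) i : ℝ)|) ^ (-t) := by
  set r := ‖x - y‖
  have hr : 0 ≤ r := norm_nonneg _
  have hfac : ∀ i,
      (2 * (1 + r)) ^ (-t) ≤ (1 + |((latticeFloor x - latticeFloor y) i : ℝ)|) ^ (-t) := by
    intro i
    refine Real.rpow_le_rpow_of_nonpos (by positivity) ?_ (neg_nonpos.2 ht)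
    have hxy : |x i - y i| ≤ r := by simpa using PiLp.norm_apply_le (x - y) i
    simpa [latticeFloor] using (one_add_abs_floor_sub_floor_le (x i) (y i)).trans (by linarith)
  calc (1 + r) ^ (-s) = 2 ^ s * (2 * (1 + r)) ^ (-s) := by
        rw [Real.mul_rpow zero_le_two (by positivity), ← mul_assoc, ← Real.rpow_add two_pos]
        simp
    _ ≤ 2 ^ s * (2 * (1 + r)) ^ (-(d * t)) :=
        mul_le_mul_of_nonneg_left
          (Real.rpow_le_rpow_of_exponent_le (by linarith) (neg_le_neg hts)) (by positivity)
    _ = 2 ^ s * ∏ _i : Fin d, (2 * (1 + r)) ^ (-t) := by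
        rw [prod_const, card_univ, Fintype.card_fin, ← Real.rpow_natCast,
          ← Real.rpow_mul (by positivity)]
        ring_nf
    _ ≤ _ := mul_le_mul_of_nonneg_left
        (prod_le_prod (fun i _ => by positivity) fun i _ => hfac i) (by positivity)

theorem RelSep.exists_card_filter_latticeFloor_eq_le {X : Set (E d)} (hX : RelSep X) :
    ∃ N : ℕ, ∀ (u : Finset X) (m : Fin d → ℤ),
      #(u.filter fun l : X => latticeFloor (l : E d) = m) ≤ N := by
  obtain ⟨N, hN⟩ := hX
  refine ⟨N, fun u m => ?_⟩
  obtain ⟨hfin, hcard⟩ := hN (WithLp.toLp 2 fun i => (m i : ℝ))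
  have hmaps : ∀ l ∈ u.filter fun l : X => latticeFloor (l : E d) = m,
      (l : E d) ∈ hfin.toFinset := by
    intro l hl
    have hm : ∀ i, ⌊(l : E d) i⌋ = m i := fun i => congrFun (mem_filter.1 hl).2 i
    refine hfin.mem_toFinset.2 ⟨l.2, fun i => ?_⟩
    simp only [← hm i]
    exact ⟨Int.floor_le _, (Int.lt_floor_add_one _).le⟩
  calc #(u.filter fun l : X => latticeFloor (l : E d) = m) ≤ #hfin.toFinset :=
        card_le_card_of_injOn _ hmaps Subtype.val_injective.injOn
    _ = _ := (Set.ncard_eq_toFinset_card _ hfin).symm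
    _ ≤ N := hcard

theorem RelSep.exists_tsum_one_add_norm_sub_rpow_neg_le {X : Set (E d)} (hX : RelSep X)
    {s : ℝ} (hs : d < s) :
    ∃ S : ℝ, ∀ k : X, Summable (fun l : X => (1 + ‖(k : E d) - l‖) ^ (-s)) ∧
      ∑' l : X, (1 + ‖(k : E d) - l‖) ^ (-s) ≤ S := by
  obtain ⟨N, hN⟩ := hX.exists_card_filter_latticeFloor_eq_le
  set t : ℝ := 1 + (s - d) / (d + 1)
  have ht : 1 < t := lt_add_of_pos_right 1 (div_pos (by linarith) (by positivity))
  have hts : d * t ≤ s := by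
    have : d * ((s - d) / (d + 1)) ≤ s - d := by
      rw [mul_div_assoc', div_le_iff₀ (by positivity)]
      nlinarith
    linarith [show d * t = d + d * ((s - d) / (d + 1)) by ring]
  set f : (Fin d → ℤ) → ℝ := fun n => 2 ^ s * ∏ i, (1 + |(n i : ℝ)|) ^ (-t)
  have hf0 : ∀ n, 0 ≤ f n := fun n => by positivity
  have hf : Summable f :=
    (summable_prod_apply (fun _ => by positivity) (summable_one_add_abs_int_rpow_neg ht)).mul_left
      _
  refine ⟨N * ∑' n, f n, fun k => ?_⟩
  have hφ : ∀ (u : Finset X) n,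
      #(u.filter fun l : X => latticeFloor (k : E d) - latticeFloor l = n) ≤ N :=
    fun u n => (card_le_card fun l hl => by
      rw [mem_filter] at hl ⊢
      exact ⟨hl.1, by rw [← hl.2, sub_sub_cancel]⟩).trans (hN u (latticeFloor (k : E d) - n))
  obtain ⟨hsum, hle⟩ := summable_comp_and_tsum_comp_le_of_card_fiber_le hφ hf0 hf
  have hcmp : ∀ l : X,
      (1 + ‖(k : E d) - l‖) ^ (-s) ≤ f (latticeFloor (k : E d) - latticeFloor l) :=
    fun l => one_add_norm_sub_rpow_neg_le (by linarith) hts k l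
  have hw : Summable fun l : X => (1 + ‖(k : E d) - l‖) ^ (-s) :=
    hsum.of_nonneg_of_le (fun l => by positivity) hcmp
  exact ⟨hw, (hw.tsum_le_tsum hcmp hsum).trans hle⟩

end RelativelySeparated

theorem stmt16 {d : ℕ} (X : Set (E d)) (hX : RelSep X) (s : ℝ) (hs : (d : ℝ) < s)
    (H : Type*) [NormedAddCommGroup H] [InnerProductSpace ℂ H] [CompleteSpace H] :
    ∃ C > (0 : ℝ), ∀ (A : X → X → H →L[ℂ] H) (M : ℝ), 0 ≤ M →
      (∀ k l : X, ‖A k l‖ * (1 + ‖(k : E d) - (l : E d)‖) ^ s ≤ M) →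
      ∀ g : X → H, Summable (fun l : X => ‖g l‖ ^ 2) →
        (∀ k : X, Summable (fun l : X => A k l (g l))) ∧
        Summable (fun k : X => ‖∑' l : X, A k l (g l)‖ ^ 2) ∧
        ∑' k : X, ‖∑' l : X, A k l (g l)‖ ^ 2
          ≤ (C * M) ^ 2 * ∑' l : X, ‖g l‖ ^ 2 := by
  obtain ⟨S, hS⟩ := hX.exists_tsum_one_add_norm_sub_rpow_neg_le hs
  refine ⟨max S 1, by positivity, fun A M hM hA g hg => ?_⟩
  set w : X → X → ℝ := fun k l => M * (1 + ‖(k : E d) - l‖) ^ (-s)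
  have hrow : ∀ k, Summable (w k) ∧ ∑' l, w k l ≤ M * max S 1 := fun k =>
    ⟨(hS k).1.mul_left M, by
      rw [tsum_mul_left]
      exact mul_le_mul_of_nonneg_left ((hS k).2.trans (le_max_left _ _)) hM⟩
  have hcol : ∀ l, (fun k => w k l) = w l := fun l =>
    funext fun k => by simp only [w, norm_sub_rev]
  have hAw : ∀ k l, ‖A k l‖ ≤ w k l := fun k l => by
    have hpos : 0 < (1 + ‖(k : E d) - l‖) ^ s := by positivity
    rw [show w k l = M * (1 + ‖(k : E d) - l‖) ^ (-s) from rfl, Real.rpow_neg (by positivity),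
      ← div_eq_mul_inv, le_div_iff₀ hpos]
    exact hA k l
  rw [mul_comm (max S 1)]
  exact schur_test (mul_nonneg hM (by positivity)) (fun k l => by positivity)
    (fun k => (hrow k).1) (fun k => (hrow k).2) (fun l => hcol l ▸ (hrow l).1)
    (fun l => hcol l ▸ (hrow l).2) hAw hg
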